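/- A strongly connected economy grows (the total amount X(t) = Σ_i x_i(t) tends to ∞) under some non-wasteful mechanism if and only if it has at least one good cycle. -/

import Mathlib

/-!
If there is no good cycle, let `w i` be the largest product of coefficients along a simple path
ending at `i`. Extending such a path by an edge `j → i` either gives a simple path ending at `i`
or closes a cycle through `i`, whose product is at most one; hence `a i j * w j ≤ w i`. Then
`∑ i, x i / w i` does not increase under any mechanism, and the total amount stays bounded.

Conversely, send each good of a good cycle entirely to the next player on the cycle, and every
other good to some player who can use it (one exists by strong connectivity). The amount
travelling around the cycle is multiplied by the cycle product on every lap.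
-/

open Filter

namespace ExpandingEconomy

/-- A (simple, directed) cycle: a nonempty list of distinct players, considered cyclically. -/
def IsCycle {n : ℕ} (C : List (Fin n)) : Prop := C ≠ [] ∧ C.Nodup

/-- Product over the edges of a cycle `C` of `g successor predecessor`:
each player in `C` produces from the good of its predecessor in `C`. -/
noncomputable def cycleEdgeProd {n : ℕ} (C : List (Fin n)) (g : Fin n → Fin n → ℝ) : ℝ :=
  ∏ m : Fin C.length,
    g (C.get ⟨((m : ℕ) + 1) % C.length,
        Nat.mod_lt _ (Nat.lt_of_le_of_lt (Nat.zero_le _) m.isLt)⟩)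
      (C.get m)

/-- The product of the production coefficients along a cycle. -/
noncomputable def cycleProd {n : ℕ} (a : Fin n → Fin n → ℝ) (C : List (Fin n)) : ℝ :=
  cycleEdgeProd C a

/-- A good cycle: the product of weights along it is strictly greater than one. -/
def IsGoodCycle {n : ℕ} (a : Fin n → Fin n → ℝ) (C : List (Fin n)) : Prop :=
  IsCycle C ∧ 1 < cycleProd a C

/-- `(i, j)` is an edge of the cycle `C`: `j` is the predecessor of `i` in `C`. -/
def IsEdgeOf {n : ℕ} (C : List (Fin n)) (i j : Fin n) : Prop :=
  ∃ m : Fin C.length, C.get m = j ∧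
    C.get ⟨((m : ℕ) + 1) % C.length,
      Nat.mod_lt _ (Nat.lt_of_le_of_lt (Nat.zero_le _) m.isLt)⟩ = i

/-- Geometric mean of a cycle (the `k`-th root of its product, `k` the length). -/
noncomputable def geoMean {n : ℕ} (a : Fin n → Fin n → ℝ) (C : List (Fin n)) : ℝ :=
  cycleProd a C ^ ((C.length : ℝ)⁻¹)

/-- A best cycle: one whose geometric mean is maximal among all cycles. -/
def IsBestCycle {n : ℕ} (a : Fin n → Fin n → ℝ) (C : List (Fin n)) : Prop :=
  IsCycle C ∧ ∀ C', IsCycle C' → geoMean a C' ≤ geoMean a C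

/-- `C` is the unique best cycle (up to rotation). -/
def UniqueBestCycle {n : ℕ} (a : Fin n → Fin n → ℝ) (C : List (Fin n)) : Prop :=
  IsBestCycle a C ∧ ∀ C', IsBestCycle a C' → C'.IsRotated C

/-- The production matrix is nonnegative. -/
def Nonneg {n : ℕ} (a : Fin n → Fin n → ℝ) : Prop := ∀ i j, 0 ≤ a i j

/-- The economy is strongly connected: the digraph with an edge `j → i`
whenever `a i j > 0` is strongly connected. -/
def StronglyConnected {n : ℕ} (a : Fin n → Fin n → ℝ) : Prop :=
  ∀ i j : Fin n, Relation.ReflTransGen (fun u v => 0 < a v u) i j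

/-- A mechanism: splitting fractions are nonnegative and sum to at most one on each good. -/
def IsMechanism {n : ℕ} (β : ℕ → Fin n → Fin n → ℝ) : Prop :=
  (∀ t i j, 0 ≤ β t i j) ∧ (∀ t j, ∑ i, β t i j ≤ 1)

/-- A non-wasteful mechanism: fractions sum to one and useless goods are not allocated. -/
def NonWasteful {n : ℕ} (a : Fin n → Fin n → ℝ) (β : ℕ → Fin n → Fin n → ℝ) : Prop :=
  (∀ t j, ∑ i, β t i j = 1) ∧ (∀ t i j, a i j = 0 → β t i j = 0)

/-- The amounts evolve under the splitting rules `β`. -/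
def MechEvolution {n : ℕ} (a : Fin n → Fin n → ℝ) (β : ℕ → Fin n → Fin n → ℝ)
    (x : ℕ → Fin n → ℝ) : Prop :=
  ∀ t i, x (t + 1) i = ∑ j, a i j * β t i j * x t j

/-- Amount of good `j` received by player `i` at round `t` under trading post. -/
noncomputable def tpY {n : ℕ} (x : ℕ → Fin n → ℝ) (b : ℕ → Fin n → Fin n → ℝ)
    (t : ℕ) (i j : Fin n) : ℝ :=
  if 0 < b t i j then (b t i j / ∑ k, b t k j) * x t j else 0

/-- Budget of a player: `B i (t+1) = ∑ k, b t k i`. -/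
noncomputable def tpBudget {n : ℕ} (b : ℕ → Fin n → Fin n → ℝ) : ℕ → Fin n → ℝ
  | 0, i => ∑ j, b 0 i j
  | t + 1, i => ∑ k, b t k i

/-- Trading post with proportional bid updates. -/
def TPDynamics {n : ℕ} (a : Fin n → Fin n → ℝ) (x : ℕ → Fin n → ℝ)
    (b : ℕ → Fin n → Fin n → ℝ) : Prop :=
  ∀ t, (∀ i, x (t + 1) i = ∑ j, a i j * tpY x b t i j) ∧
    (∀ i j, b (t + 1) i j = a i j * tpY x b t i j / x (t + 1) i * tpBudget b (t + 1) i)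

/-- Non-degenerate starting configuration, with total money normalized to one. -/
def NonDegenerate {n : ℕ} (a : Fin n → Fin n → ℝ) (x : ℕ → Fin n → ℝ)
    (b : ℕ → Fin n → Fin n → ℝ) : Prop :=
  (∀ i, 0 < x 0 i) ∧ (∀ i j, 0 < b 0 i j ↔ 0 < a i j) ∧ (∑ i, ∑ j, b 0 i j) = 1

section Paths

variable {α : Type*} (a : α → α → ℝ)

def pathProd : List α → ℝ
  | [] => 1
  | [_] => 1
  | j :: i :: l => a i j * pathProd (i :: l)

variable {a}

lemma pathProd_nonneg (ha : ∀ i j, 0 ≤ a i j) : ∀ l, 0 ≤ pathProd a l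
  | [] => zero_le_one
  | [_] => zero_le_one
  | j :: i :: l => mul_nonneg (ha i j) (pathProd_nonneg ha (i :: l))

variable (a)

lemma pathProd_append_pair : ∀ (l : List α) (j i : α),
    pathProd a (l ++ [j, i]) = pathProd a (l ++ [j]) * a i j
  | [], _, _ => by simp [pathProd]
  | [_], _, _ => by simp [pathProd]
  | k :: m :: l, j, i => by
    have ih := pathProd_append_pair (m :: l) j i
    simp only [List.cons_append, pathProd] at ih ⊢
    rw [ih]
    ring

lemma pathProd_append_cons : ∀ (l₁ : List α) (i : α) (l₂ : List α),
    pathProd a (l₁ ++ i :: l₂) = pathProd a (l₁ ++ [i]) * pathProd a (i :: l₂)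
  | [], _, _ => by simp [pathProd]
  | [_], _, _ => by simp [pathProd]
  | k :: m :: l, i, l₂ => by
    have ih := pathProd_append_cons (m :: l) i l₂
    simp only [List.cons_append, pathProd] at ih ⊢
    rw [ih]
    ring

lemma pathProd_append_singleton_eq_prod : ∀ (l : List α) (x : α),
    pathProd a (l ++ [x]) = ∏ m : Fin l.length, a (l ++ [x])[(m : ℕ) + 1] l[m]
  | [], _ => by simp [pathProd]
  | [j], x => by simp [pathProd]
  | j :: i :: l, x => by
    show a i j * pathProd a (i :: l ++ [x]) = ∏ m : Fin ((i :: l).length + 1), _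
    rw [pathProd_append_singleton_eq_prod (i :: l) x, Fin.prod_univ_succ]
    simp

end Paths

lemma cycleProd_cons_eq_pathProd {n : ℕ} (a : Fin n → Fin n → ℝ) (i : Fin n) (L : List (Fin n)) :
    cycleProd a (i :: L) = pathProd a (i :: L ++ [i]) := by
  rw [pathProd_append_singleton_eq_prod, cycleProd, cycleEdgeProd]
  refine Finset.prod_congr rfl fun ⟨m, hm⟩ _ => congrArg₂ a ?_ rfl
  simp only [List.length_cons, List.get_eq_getElem, List.cons_append, List.getElem_cons_succ]
  rcases (Nat.lt_succ_iff.1 hm).lt_or_eq with h | rfl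
  · simp [Nat.mod_eq_of_lt (Nat.succ_lt_succ h), List.getElem_append_left h]
  · simp

section Potential

variable {n : ℕ}

noncomputable def pathPotential (a : Fin n → Fin n → ℝ) (i : Fin n) : ℝ :=
  ⨆ l : {l : List (Fin n) // (l ++ [i]).Nodup}, pathProd a (l.1 ++ [i])

variable {a : Fin n → Fin n → ℝ}

lemma bddAbove_range_pathProd (i : Fin n) :
    BddAbove (Set.range fun l : {l : List (Fin n) // (l ++ [i]).Nodup} =>
      pathProd a (l.1 ++ [i])) :=
  have : Finite {l : List (Fin n) // (l ++ [i]).Nodup} :=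
    Finite.of_injective (β := {l : List (Fin n) // l.Nodup})
      (fun l => ⟨l.1, l.2.sublist (List.sublist_append_left _ _)⟩)
      fun _ _ h => Subtype.ext (Subtype.mk.inj h)
  Finite.bddAbove_range _

lemma pathProd_le_pathPotential {i : Fin n} {l : List (Fin n)} (hl : (l ++ [i]).Nodup) :
    pathProd a (l ++ [i]) ≤ pathPotential a i :=
  le_ciSup (bddAbove_range_pathProd i) ⟨l, hl⟩

lemma one_le_pathPotential (i : Fin n) : 1 ≤ pathPotential a i :=
  pathProd_le_pathPotential (l := []) (List.nodup_singleton i)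

lemma mul_pathPotential_le (ha : Nonneg a) (hnc : ∀ C, IsCycle C → cycleProd a C ≤ 1)
    (i j : Fin n) : a i j * pathPotential a j ≤ pathPotential a i := by
  have : Nonempty {l : List (Fin n) // (l ++ [j]).Nodup} := ⟨⟨[], List.nodup_singleton j⟩⟩
  rw [pathPotential, Real.mul_iSup_of_nonneg (ha i j)]
  refine ciSup_le fun ⟨l, hl⟩ => ?_
  rw [mul_comm, ← pathProd_append_pair]
  by_cases hi : i ∈ l ++ [j]
  · obtain ⟨L₁, L₂, hsplit⟩ := List.append_of_mem hi
    have hclose : l ++ [j, i] = L₁ ++ i :: (L₂ ++ [i]) := by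
      simpa using congrArg (· ++ [i]) hsplit
    rw [hsplit] at hl
    have hcycle : cycleProd a (i :: L₂) ≤ 1 :=
      hnc _ ⟨List.cons_ne_nil _ _, hl.sublist (List.sublist_append_right _ _)⟩
    have hpath : pathProd a (L₁ ++ [i]) ≤ pathPotential a i :=
      pathProd_le_pathPotential (hl.sublist ((List.nil_sublist L₂).cons_cons i |>.append_left L₁))
    calc pathProd a (l ++ [j, i])
        = pathProd a (L₁ ++ [i]) * cycleProd a (i :: L₂) := by
          rw [hclose, pathProd_append_cons, cycleProd_cons_eq_pathProd, List.cons_append]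
      _ ≤ pathProd a (L₁ ++ [i]) := mul_le_of_le_one_right (pathProd_nonneg ha _) hcycle
      _ ≤ pathPotential a i := hpath
  · have hl' : ((l ++ [j]) ++ [i]).Nodup :=
      List.nodup_append.2 ⟨hl, List.nodup_singleton i, fun x hx y hy hxy => hi (by simp_all)⟩
    simpa using pathProd_le_pathPotential hl'

end Potential

section Dynamics

variable {n : ℕ} {a : Fin n → Fin n → ℝ} {β : ℕ → Fin n → Fin n → ℝ} {x : ℕ → Fin n → ℝ}

def mechTrajectory (a : Fin n → Fin n → ℝ) (β : ℕ → Fin n → Fin n → ℝ) (x₀ : Fin n → ℝ) :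
    ℕ → Fin n → ℝ
  | 0 => x₀
  | t + 1 => fun i => ∑ j, a i j * β t i j * mechTrajectory a β x₀ t j

lemma mechEvolution_mechTrajectory (a : Fin n → Fin n → ℝ) (β : ℕ → Fin n → Fin n → ℝ)
    (x₀ : Fin n → ℝ) : MechEvolution a β (mechTrajectory a β x₀) :=
  fun _ _ => rfl

lemma MechEvolution.nonneg (hx : MechEvolution a β x) (ha : Nonneg a) (hβ : IsMechanism β)
    (hx₀ : ∀ i, 0 ≤ x 0 i) : ∀ t i, 0 ≤ x t i
  | 0 => hx₀
  | t + 1 => fun i => by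
    rw [hx t i]
    exact Finset.sum_nonneg fun j _ =>
      mul_nonneg (mul_nonneg (ha i j) (hβ.1 t i j)) (hx.nonneg ha hβ hx₀ t j)

lemma MechEvolution.sum_div_succ_le (hx : MechEvolution a β x) (hβ : IsMechanism β)
    {w : Fin n → ℝ} (hw : ∀ i, 0 < w i) (hsub : ∀ i j, a i j * w j ≤ w i) {t : ℕ}
    (hxt : ∀ i, 0 ≤ x t i) :
    ∑ i, x (t + 1) i / w i ≤ ∑ i, x t i / w i := by
  have hedge : ∀ i j, a i j * β t i j * x t j / w i ≤ β t i j * (x t j / w j) := fun i j => by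
    have hβx : 0 ≤ β t i j * x t j / w j := div_nonneg (mul_nonneg (hβ.1 t i j) (hxt j)) (hw j).le
    rw [div_le_iff₀ (hw i)]
    calc a i j * β t i j * x t j = β t i j * x t j / w j * (a i j * w j) := by
          field_simp [(hw j).ne']
      _ ≤ β t i j * x t j / w j * w i := mul_le_mul_of_nonneg_left (hsub i j) hβx
      _ = β t i j * (x t j / w j) * w i := by ring
  calc ∑ i, x (t + 1) i / w i = ∑ i, ∑ j, a i j * β t i j * x t j / w i := by
        simp only [hx t, Finset.sum_div]
    _ ≤ ∑ i, ∑ j, β t i j * (x t j / w j) :=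
        Finset.sum_le_sum fun i _ => Finset.sum_le_sum fun j _ => hedge i j
    _ = ∑ j, (∑ i, β t i j) * (x t j / w j) := by
        rw [Finset.sum_comm]; simp only [Finset.sum_mul]
    _ ≤ ∑ j, x t j / w j :=
        Finset.sum_le_sum fun j _ =>
          mul_le_of_le_one_left (div_nonneg (hxt j) (hw j).le) (hβ.2 t j)

lemma MechEvolution.bddAbove_range_sum (hx : MechEvolution a β x) (ha : Nonneg a)
    (hβ : IsMechanism β) (hx₀ : ∀ i, 0 ≤ x 0 i) {w : Fin n → ℝ} (hw : ∀ i, 0 < w i)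
    (hsub : ∀ i j, a i j * w j ≤ w i) :
    BddAbove (Set.range fun t => ∑ i, x t i) := by
  have hxnn := hx.nonneg ha hβ hx₀
  set Φ : ℕ → ℝ := fun t => ∑ i, x t i / w i
  have hΦ : Antitone Φ :=
    antitone_nat_of_succ_le fun t => hx.sum_div_succ_le hβ hw hsub (hxnn t)
  refine ⟨(∑ i, w i) * Φ 0, Set.forall_mem_range.2 fun t => ?_⟩
  have hcoord : ∀ i, x t i ≤ w i * Φ 0 := fun i => by
    rw [← div_le_iff₀' (hw i)]
    exact (Finset.single_le_sum (f := fun i => x t i / w i)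
      (fun j _ => div_nonneg (hxnn t j) (hw j).le) (Finset.mem_univ i)).trans (hΦ t.zero_le)
  simpa only [Finset.sum_mul] using Finset.sum_le_sum fun i _ => hcoord i

lemma MechEvolution.not_tendsto_of_forall_cycleProd_le_one (hx : MechEvolution a β x)
    (ha : Nonneg a) (hβ : IsMechanism β) (hx₀ : ∀ i, 0 ≤ x 0 i)
    (hnc : ∀ C, IsCycle C → cycleProd a C ≤ 1) :
    ¬Tendsto (fun t => ∑ i, x t i) atTop atTop := fun h =>
  not_bddAbove_of_tendsto_atTop h <|
    hx.bddAbove_range_sum ha hβ hx₀ (fun i => one_pos.trans_le (one_le_pathPotential i))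
      (mul_pathPotential_le ha hnc)

end Dynamics

lemma tendsto_atTop_of_periodic_growth {k : ℕ} (hk : 0 < k) {e y : ℕ → ℝ}
    (he_per : Function.Periodic e k) (he : ∀ t, 0 < e t) (hP : 1 < ∏ t ∈ Finset.range k, e t)
    (hy₀ : 0 < y 0) (hy : ∀ t, e t * y t ≤ y (t + 1)) : Tendsto y atTop atTop := by
  set P := ∏ t ∈ Finset.range k, e t
  set u : ℕ → ℝ := fun t => ∏ r ∈ Finset.range t, e r
  have hu_pos : ∀ t, 0 < u t := fun t => Finset.prod_pos fun r _ => he r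
  have hu_le : ∀ t, u t * y 0 ≤ y t := fun t => by
    induction t with
    | zero => simp [u]
    | succ t ih =>
      calc u (t + 1) * y 0 = e t * (u t * y 0) := by simp only [u, Finset.prod_range_succ]; ring
        _ ≤ e t * y t := mul_le_mul_of_nonneg_left ih (he t).le
        _ ≤ y (t + 1) := hy t
  have hu_add : ∀ t, u (t + k) = P * u t := fun t => by
    induction t with
    | zero => simp [u, P]
    | succ t ih =>
      rw [Nat.add_right_comm]
      simp only [u, Finset.prod_range_succ] at ih ⊢
      rw [ih, he_per t]
      ring
  have hu_mul : ∀ s q, u (s + k * q) = P ^ q * u s := fun s q => by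
    induction q with
    | zero => simp
    | succ q ih => rw [Nat.mul_succ, ← Nat.add_assoc, hu_add, ih, pow_succ]; ring
  obtain ⟨s₀, -, hs₀⟩ := (Finset.range k).exists_min_image u (Finset.nonempty_range_iff.2 hk.ne')
  have hlower : ∀ t, u s₀ * y 0 * P ^ (t / k) ≤ y t := fun t => by
    refine le_trans ?_ (hu_le t)
    rw [← Nat.mod_add_div t k, hu_mul, Nat.mod_add_div]
    have hmin := hs₀ (t % k) (Finset.mem_range.2 (Nat.mod_lt t hk))
    calc u s₀ * y 0 * P ^ (t / k) ≤ u (t % k) * y 0 * P ^ (t / k) := by gcongr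
      _ = P ^ (t / k) * u (t % k) * y 0 := by ring
  have hpow : Tendsto (fun t => P ^ (t / k)) atTop atTop :=
    (tendsto_pow_atTop_atTop_of_one_lt hP).comp (Nat.tendsto_div_const_atTop hk.ne')
  exact tendsto_atTop_mono hlower (hpow.const_mul_atTop (mul_pos (hu_pos s₀) hy₀))

section GoodCycle

variable {n : ℕ} {a : Fin n → Fin n → ℝ} {C : List (Fin n)}

lemma IsCycle.length_pos (hC : IsCycle C) : 0 < C.length := List.length_pos_iff.2 hC.1

lemma IsCycle.next_getElem (hC : IsCycle C) (t : ℕ) :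
    C.next (C[t % C.length]'(Nat.mod_lt _ hC.length_pos)) (List.getElem_mem _) =
      C[(t + 1) % C.length]'(Nat.mod_lt _ hC.length_pos) := by
  simp [List.next_getElem C hC.2]

lemma IsGoodCycle.next_pos (hC : IsGoodCycle a C) (ha : Nonneg a) {j : Fin n} (hj : j ∈ C) :
    0 < a (C.next j hj) j := by
  obtain ⟨m, rfl⟩ := List.mem_iff_get.1 hj
  refine (ha _ _).lt_of_ne' fun h0 => ?_
  have : cycleProd a C = 0 :=
    Finset.prod_eq_zero (Finset.mem_univ m) (by simpa [List.next_getElem C hC.1.2] using h0)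
  linarith [hC.2]

lemma IsCycle.cycleProd_eq_prod_range (hC : IsCycle C) (a : Fin n → Fin n → ℝ) :
    cycleProd a C = ∏ t ∈ Finset.range C.length,
      a (C[(t + 1) % C.length]'(Nat.mod_lt _ hC.length_pos))
        (C[t % C.length]'(Nat.mod_lt _ hC.length_pos)) := by
  rw [cycleProd, cycleEdgeProd, ← Fin.prod_univ_eq_prod_range]
  refine Finset.prod_congr rfl fun m _ => ?_
  simp [Nat.mod_eq_of_lt m.isLt]

lemma IsGoodCycle.exists_tendsto_apply (hC : IsGoodCycle a C) (ha : Nonneg a)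
    {x : ℕ → Fin n → ℝ} (hx₀ : ∀ j ∈ C, 0 < x 0 j)
    (hstep : ∀ t j (hj : j ∈ C), a (C.next j hj) j * x t j ≤ x (t + 1) (C.next j hj)) :
    ∃ c : ℕ → Fin n, Tendsto (fun t => x t (c t)) atTop atTop := by
  have hk := hC.1.length_pos
  set c : ℕ → Fin n := fun t => C[t % C.length]'(Nat.mod_lt _ hk)
  have hc_next : ∀ t, C.next (c t) (List.getElem_mem _) = c (t + 1) := hC.1.next_getElem
  refine ⟨c, tendsto_atTop_of_periodic_growth hk (e := fun t => a (c (t + 1)) (c t))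
    (fun t => ?_) (fun t => ?_) ?_ (hx₀ _ (List.getElem_mem _)) (fun t => ?_)⟩
  · simp only [c, Nat.add_right_comm t C.length 1, Nat.add_mod_right]
  · rw [← hc_next]
    exact hC.next_pos ha _
  · exact hC.1.cycleProd_eq_prod_range a ▸ hC.2
  · simpa only [hc_next] using hstep t (c t) (List.getElem_mem _)

end GoodCycle

section Successor

variable {n : ℕ} {a : Fin n → Fin n → ℝ}

def successorMechanism (τ : Fin n → Fin n) : ℕ → Fin n → Fin n → ℝ :=
  fun _ i j => if i = τ j then 1 else 0

lemma isMechanism_successorMechanism (τ : Fin n → Fin n) :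
    IsMechanism (successorMechanism τ) :=
  ⟨fun _ _ _ => by unfold successorMechanism; split_ifs <;> norm_num,
    fun _ _ => by simp [successorMechanism]⟩

lemma nonWasteful_successorMechanism {τ : Fin n → Fin n} (hτ : ∀ j, 0 < a (τ j) j) :
    NonWasteful a (successorMechanism τ) :=
  ⟨fun _ _ => by simp [successorMechanism],
    fun _ _ j h => if_neg <| by rintro rfl; exact (hτ j).ne' h⟩

lemma MechEvolution.mul_le_apply_successor {τ : Fin n → Fin n} {x : ℕ → Fin n → ℝ}
    (hx : MechEvolution a (successorMechanism τ) x) (ha : Nonneg a) {t : ℕ}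
    (hxt : ∀ i, 0 ≤ x t i) (j : Fin n) : a (τ j) j * x t j ≤ x (t + 1) (τ j) := by
  rw [hx]
  calc a (τ j) j * x t j = a (τ j) j * successorMechanism τ t (τ j) j * x t j := by
        simp [successorMechanism]
    _ ≤ ∑ j', a (τ j) j' * successorMechanism τ t (τ j) j' * x t j' :=
        Finset.single_le_sum (f := fun j' => a (τ j) j' * successorMechanism τ t (τ j) j' * x t j')
          (fun j' _ => mul_nonneg (mul_nonneg (ha _ _)
            ((isMechanism_successorMechanism τ).1 t _ _)) (hxt j')) (Finset.mem_univ j)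

lemma StronglyConnected.exists_pos_of_ne (hsc : StronglyConnected a) {j k : Fin n}
    (hjk : j ≠ k) : ∃ i, 0 < a i j := by
  rcases (hsc j k).cases_head with h | ⟨i, hi, -⟩
  · exact absurd h hjk
  · exact ⟨i, hi⟩

variable {C : List (Fin n)}

lemma IsGoodCycle.exists_successor (hC : IsGoodCycle a C) (ha : Nonneg a)
    (hsc : StronglyConnected a) :
    ∃ τ : Fin n → Fin n, (∀ j, 0 < a (τ j) j) ∧ ∀ j (hj : j ∈ C), τ j = C.next j hj := by
  have : ∀ j, ∃ i, 0 < a i j ∧ ∀ hj : j ∈ C, i = C.next j hj := fun j => by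
    by_cases hj : j ∈ C
    · exact ⟨C.next j hj, hC.next_pos ha hj, fun _ => rfl⟩
    · obtain ⟨i, hi⟩ := hsc.exists_pos_of_ne (j := j) (k := C.head hC.1.1) <| by
        rintro rfl; exact hj (List.head_mem _)
      exact ⟨i, hi, fun h => absurd h hj⟩
  choose τ hτ using this
  exact ⟨τ, fun j => (hτ j).1, fun j => (hτ j).2⟩

lemma IsGoodCycle.grows (hC : IsGoodCycle a C) (ha : Nonneg a) (hsc : StronglyConnected a) :
    ∃ β : ℕ → Fin n → Fin n → ℝ, IsMechanism β ∧ NonWasteful a β ∧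
      ∀ x : ℕ → Fin n → ℝ, (∀ i, 0 < x 0 i) → MechEvolution a β x →
        Tendsto (fun t => ∑ i, x t i) atTop atTop := by
  obtain ⟨τ, hτ_pos, hτ_next⟩ := hC.exists_successor ha hsc
  refine ⟨successorMechanism τ, isMechanism_successorMechanism τ,
    nonWasteful_successorMechanism hτ_pos, fun x hx₀ hx => ?_⟩
  have hxnn := hx.nonneg ha (isMechanism_successorMechanism τ) fun i => (hx₀ i).le
  obtain ⟨c, hc⟩ := hC.exists_tendsto_apply ha (fun j _ => hx₀ j) fun t j hj =>
    hτ_next j hj ▸ hx.mul_le_apply_successor ha (hxnn t) j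
  exact tendsto_atTop_mono
    (fun t => Finset.single_le_sum (fun i _ => hxnn t i) (Finset.mem_univ (c t))) hc

end Successor

/-- A strongly connected economy grows under some non-wasteful mechanism
iff it has at least one good cycle. -/
theorem grows_under_some_nonwasteful_mechanism_iff
    {n : ℕ} (a : Fin n → Fin n → ℝ) (ha : Nonneg a) (hsc : StronglyConnected a) :
    (∃ β : ℕ → Fin n → Fin n → ℝ, IsMechanism β ∧ NonWasteful a β ∧
        ∀ x : ℕ → Fin n → ℝ, (∀ i, 0 < x 0 i) → MechEvolution a β x →
          Tendsto (fun t => ∑ i, x t i) atTop atTop) ↔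
      ∃ C : List (Fin n), IsGoodCycle a C := by
  refine ⟨fun ⟨β, hβ, _, hgrow⟩ => ?_, fun ⟨C, hC⟩ => hC.grows ha hsc⟩
  by_contra hno
  have hnc : ∀ C, IsCycle C → cycleProd a C ≤ 1 := fun C hC =>
    not_lt.1 fun h => hno ⟨C, hC, h⟩
  have hx := mechEvolution_mechTrajectory a β 1
  exact hx.not_tendsto_of_forall_cycleProd_le_one ha hβ (fun _ => zero_le_one) hnc
    (hgrow _ (fun _ => one_pos) hx)
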